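/- Combining the error bound and distance argument: suppose the estimation error Δo satisfies Δoᵀ Σ⁻¹ Δo ≤ k_ε with probability at least 1 − ε, where Σ has eigenvalues λ₁,...,λ_N. If the planned robot position x satisfies ‖x − o‖ ≥ r_ins + Σₙ √(k_ε λₙ) with respect to the estimated agent position o, then ‖x − o*‖ ≥ r_ins holds with probability at least 1 − ε, where o* = o − Δo is the true agent position. -/

import Mathlib

open Matrix MeasureTheory

/-- If the estimation error `Δo` satisfies `Δoᵀ Σ⁻¹ Δo ≤ k_ε` with probability at
least `1 − ε`, where `Σ` is positive definite with orthonormal eigenbasis `v` and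
eigenvalues `lam`, and the planned position `x` keeps distance at least
`r_ins + ∑ₙ √(k_ε λₙ)` from the estimated agent position `o`, then
`‖x − o*‖ ≥ r_ins` holds with probability at least `1 − ε`, where `o* = o − Δo`. -/
theorem robust_safety_probability {N : ℕ}
    {Ω : Type*} [MeasurableSpace Ω] (P : Measure Ω) [IsProbabilityMeasure P]
    (S : Matrix (Fin N) (Fin N) ℝ) (hS : S.PosDef)
    (lam : Fin N → ℝ) (v : Fin N → (Fin N → ℝ))
    (heig : ∀ n, S.mulVec (v n) = lam n • v n)
    (horth : ∀ m n, v m ⬝ᵥ v n = if m = n then (1:ℝ) else 0)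
    (Δo : Ω → (Fin N → ℝ)) (kε ε rins : ℝ) (hk : 0 ≤ kε) (hrins : 0 < rins)
    (hprob : P {ω | Δo ω ⬝ᵥ S⁻¹.mulVec (Δo ω) ≤ kε} ≥ ENNReal.ofReal (1 - ε))
    (x o : Fin N → ℝ)
    (hdist : Real.sqrt ((x - o) ⬝ᵥ (x - o)) ≥ rins + ∑ n, Real.sqrt (kε * lam n)) :
    P {ω | Real.sqrt ((x - (o - Δo ω)) ⬝ᵥ (x - (o - Δo ω))) ≥ rins}
      ≥ ENNReal.ofReal (1 - ε) := by
  -- N = 0 is contradictory with hdist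
  rcases Nat.eq_zero_or_pos N with hN | hN
  · exfalso
    subst hN
    have h0 : (x - o) ⬝ᵥ (x - o) = 0 := by simp [dotProduct]
    rw [h0] at hdist
    simp at hdist
    linarith
  haveI : Nonempty (Fin N) := ⟨⟨0, hN⟩⟩
  -- basic facts
  have hvne : ∀ n, v n ≠ 0 := by
    intro n hvn
    have := horth n n
    rw [hvn] at this
    simp [dotProduct] at this
  have hlam : ∀ n, 0 < lam n := by
    intro n
    have h1 := hS.re_dotProduct_pos (hvne n)
    have h2 : star (v n) ⬝ᵥ S.mulVec (v n) = lam n := by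
      rw [heig, star_trivial, dotProduct_smul, horth]
      simp
    rwa [h2] at h1
  have hdet : IsUnit S.det := isUnit_iff_ne_zero.mpr hS.det_pos.ne'
  have hinv : ∀ n, S⁻¹.mulVec (v n) = (lam n)⁻¹ • v n := by
    intro n
    have h1 : S⁻¹.mulVec (S.mulVec (v n)) = v n := by
      rw [mulVec_mulVec, Matrix.nonsing_inv_mul S hdet, one_mulVec]
    rw [heig, mulVec_smul] at h1
    conv_rhs => rw [← h1]
    rw [smul_smul, inv_mul_cancel₀ (hlam n).ne', one_smul]
  -- bilinearity helpers
  have hsum_dp : ∀ (f : Fin N → Fin N → ℝ) (y : Fin N → ℝ),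
      (∑ m, f m) ⬝ᵥ y = ∑ m, f m ⬝ᵥ y := by
    intro f y
    simp only [dotProduct, Finset.sum_apply, Finset.sum_mul]
    exact Finset.sum_comm
  have hdp_sum : ∀ (y : Fin N → ℝ) (f : Fin N → Fin N → ℝ),
      y ⬝ᵥ (∑ m, f m) = ∑ m, y ⬝ᵥ f m := by
    intro y f
    simp only [dotProduct, Finset.sum_apply, Finset.mul_sum]
    exact Finset.sum_comm
  -- linear independence and basis
  have hli : LinearIndependent ℝ v := by
    rw [Fintype.linearIndependent_iff]
    intro g hg m
    have h1 := congrArg (fun u => u ⬝ᵥ v m) hg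
    simp only [hsum_dp, smul_dotProduct, horth, zero_dotProduct] at h1
    simp only [smul_eq_mul, mul_ite, mul_one, mul_zero, Finset.sum_ite_eq',
      Finset.mem_univ, if_true] at h1
    exact h1
  have hcard : Fintype.card (Fin N) = Module.finrank ℝ (Fin N → ℝ) := by
    simp [Module.finrank_fin_fun]
  let b := basisOfLinearIndependentOfCardEqFinrank hli hcard
  have hb : ⇑b = v := coe_basisOfLinearIndependentOfCardEqFinrank hli hcard
  -- key bound: the error is small
  have key : ∀ w : Fin N → ℝ, w ⬝ᵥ S⁻¹.mulVec w ≤ kε →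
      Real.sqrt (w ⬝ᵥ w) ≤ ∑ n, Real.sqrt (kε * lam n) := by
    intro w hw
    set c : Fin N → ℝ := fun n => b.repr w n with hc
    have hwsum : ∑ n, c n • v n = w := by
      have := b.sum_repr w
      rwa [hb] at this
    have hww : w ⬝ᵥ w = ∑ n, c n ^ 2 := by
      rw [← hwsum, hsum_dp]
      congr 1
      ext m
      rw [smul_dotProduct, hdp_sum]
      simp only [dotProduct_smul, horth]
      simp [Finset.sum_ite_eq', sq, mul_comm]
    have hSw : S⁻¹.mulVec w = ∑ n, (c n * (lam n)⁻¹) • v n := by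
      rw [← hwsum, ← S⁻¹.mulVecLin_apply, map_sum]
      refine Finset.sum_congr rfl fun n _ => ?_
      rw [_root_.map_smul, S⁻¹.mulVecLin_apply, hinv n, smul_smul]
    have hquad : w ⬝ᵥ S⁻¹.mulVec w = ∑ n, c n ^ 2 * (lam n)⁻¹ := by
      rw [hSw, hdp_sum]
      congr 1
      ext m
      rw [dotProduct_smul, ← hwsum, hsum_dp]
      simp only [smul_dotProduct, horth]
      simp [Finset.sum_ite_eq', sq]
      ring
    rw [hquad] at hw
    have hterm : ∀ n, c n ^ 2 ≤ kε * lam n := by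
      intro n
      have h1 : c n ^ 2 * (lam n)⁻¹ ≤ kε := by
        refine le_trans (Finset.single_le_sum (f := fun n => c n ^ 2 * (lam n)⁻¹)
          (fun i _ => mul_nonneg (sq_nonneg _) (inv_nonneg.mpr (hlam i).le))
          (Finset.mem_univ n)) hw
      have h2 := mul_le_mul_of_nonneg_right h1 (hlam n).le
      rwa [mul_assoc, inv_mul_cancel₀ (hlam n).ne', mul_one] at h2
    have hsumle : ∑ n, c n ^ 2 ≤ (∑ n, Real.sqrt (kε * lam n)) ^ 2 := by
      calc ∑ n, c n ^ 2 ≤ ∑ n, Real.sqrt (kε * lam n) ^ 2 := by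
            refine Finset.sum_le_sum fun n _ => ?_
            rw [Real.sq_sqrt (mul_nonneg hk (hlam n).le)]
            exact hterm n
        _ ≤ (∑ n, Real.sqrt (kε * lam n)) ^ 2 :=
            Finset.sum_sq_le_sq_sum_of_nonneg fun n _ => Real.sqrt_nonneg _
    rw [hww]
    calc Real.sqrt (∑ n, c n ^ 2) ≤ Real.sqrt ((∑ n, Real.sqrt (kε * lam n)) ^ 2) :=
          Real.sqrt_le_sqrt hsumle
      _ = ∑ n, Real.sqrt (kε * lam n) :=
          Real.sqrt_sq (Finset.sum_nonneg fun n _ => Real.sqrt_nonneg _)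
  -- norm interpretation
  have hnorm : ∀ a : Fin N → ℝ,
      Real.sqrt (a ⬝ᵥ a) = ‖(WithLp.equiv 2 (Fin N → ℝ)).symm a‖ := by
    intro a
    rw [EuclideanSpace.norm_eq]
    congr 1
    simp [dotProduct, WithLp.equiv_symm_apply, PiLp.toLp_apply, Real.norm_eq_abs, sq_abs, sq]
  -- event inclusion
  refine le_trans hprob (measure_mono ?_)
  intro ω hω
  simp only [Set.mem_setOf_eq] at hω ⊢
  have hsmall := key (Δo ω) hω
  have hx : x - (o - Δo ω) = (x - o) + Δo ω := by abel
  rw [hx, hnorm]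
  have hE : (WithLp.equiv 2 (Fin N → ℝ)).symm ((x - o) + Δo ω)
      = (WithLp.equiv 2 (Fin N → ℝ)).symm (x - o) + (WithLp.equiv 2 (Fin N → ℝ)).symm (Δo ω) := by
    rfl
  rw [hE]
  have htri : ‖(WithLp.equiv 2 (Fin N → ℝ)).symm (x - o)‖
      ≤ ‖(WithLp.equiv 2 (Fin N → ℝ)).symm (x - o) + (WithLp.equiv 2 (Fin N → ℝ)).symm (Δo ω)‖
        + ‖(WithLp.equiv 2 (Fin N → ℝ)).symm (Δo ω)‖ :=
    norm_le_add_norm_add _ _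
  rw [hnorm] at hdist hsmall
  linarith
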